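/- Let k ≥ 1 and let w ∈ G_k be a good involution. Then: (1) c(xwx⁻¹) = c(xwx⁻¹t) = c(w) + a(w); (2) for any 1 ≤ i ≤ k with w(i) = i, c(xw x_i⁻¹) = c(w) + d(i, w). -/

import Mathlib

namespace PaperB

open scoped Classical

def B (n : ℕ) : Subgroup (Equiv.Perm ℤ) where
  carrier := {w | (∀ i : ℤ, w (-i) = - w i) ∧ ∀ i : ℤ, (n : ℤ) < |i| → w i = i}
  one_mem' := ⟨fun _ => rfl, fun _ _ => rfl⟩
  mul_mem' := by
    rintro a b ⟨ha1, ha2⟩ ⟨hb1, hb2⟩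
    refine ⟨fun i => ?_, fun i hi => ?_⟩
    · rw [Equiv.Perm.mul_apply, Equiv.Perm.mul_apply, hb1, ha1]
    · rw [Equiv.Perm.mul_apply, hb2 i hi, ha2 i hi]
  inv_mem' := by
    rintro a ⟨ha1, ha2⟩
    refine ⟨fun i => a.injective ?_, fun i hi => a.injective ?_⟩
    · rw [show ∀ x, a (a⁻¹ x) = x from fun x => a.apply_symm_apply x, ha1,
        show ∀ x, a (a⁻¹ x) = x from fun x => a.apply_symm_apply x]
    · rw [show ∀ x, a (a⁻¹ x) = x from fun x => a.apply_symm_apply x, ha2 i hi]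

def t : Equiv.Perm ℤ := Equiv.swap (-1) 1

def s (i : ℕ) : Equiv.Perm ℤ :=
  Equiv.swap (i : ℤ) ((i : ℤ) + 1) * Equiv.swap (-(i : ℤ)) (-((i : ℤ) + 1))

def gens (n : ℕ) : Set (Equiv.Perm ℤ) := insert t (s '' Set.Ico 1 n)

noncomputable def len (n : ℕ) (w : Equiv.Perm ℤ) : ℕ :=
  sInf {l | ∃ L : List (Equiv.Perm ℤ), (∀ g ∈ L, g ∈ gens n) ∧ L.prod = w ∧ L.length = l}

/-- A model of the Iwahori–Hecke algebra `H_{p,q}(Bₘ)`:  a `ℂ`-algebra `H` together with a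
family `T w`, `w ∈ Bₘ`, which is linearly independent, satisfies `T 1 = 1`, and satisfies the
standard multiplication rule
`T w * T g = T (w g)` if `ℓ(w g) > ℓ(w)` and
`T w * T g = par(g) T (w g) + (1 - par(g)) T w` otherwise,
where `par t = p` and `par sᵢ = q`. -/
structure HeckeModel (m : ℕ) (p q : ℂ) (H : Type) [Ring H] [Algebra ℂ H] where
  T : Equiv.Perm ℤ → H
  T_one : T 1 = 1
  T_mul : ∀ w ∈ B m, ∀ g ∈ gens m,
    T w * T g =
      if len m w < len m (w * g) then T (w * g)
      else (if g = t then p else q) • T (w * g) + (1 - if g = t then p else q) • T w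
  free : LinearIndependent ℂ (fun w : {x // x ∈ B m} => T w.1)

/-- The element `-w`, given by `(-w)(i) = -(w i)`. -/
def negOf (w : Equiv.Perm ℤ) : Equiv.Perm ℤ := (Equiv.neg ℤ : Equiv.Perm ℤ) * w

/-- A good involution in `B_k`. -/
def Good (k : ℕ) (w : Equiv.Perm ℤ) : Prop :=
  w ∈ B k ∧ w * w = 1 ∧ ∀ i : ℤ, 1 ≤ i → i ≤ (k : ℤ) → (w i = i ∨ w i < 0)

/-- `a(w)`: the number of `1 ≤ j ≤ m` with `w j = j`. -/
noncomputable def aFix (m : ℕ) (w : Equiv.Perm ℤ) : ℕ :=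
  ((Finset.Icc (1 : ℤ) (m : ℤ)).filter fun j => w j = j).card

/-- `d(i, w)`: the number of `i < j ≤ m` with `w j = j`. -/
noncomputable def dFix (m : ℕ) (i : ℤ) (w : Equiv.Perm ℤ) : ℕ :=
  ((Finset.Ioc i (m : ℤ)).filter fun j => w j = j).card

/-- `c(w)`: the number of `w`-tidy pairs `{i, j}`, i.e. pairs of distinct indices
`1 ≤ i, j ≤ m` with `-w i < j` and `-w j < i`. -/
noncomputable def cTidy (m : ℕ) (w : Equiv.Perm ℤ) : ℕ :=
  (((Finset.Icc (1 : ℤ) (m : ℤ)) ×ˢ (Finset.Icc (1 : ℤ) (m : ℤ))).filter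
    fun pr => pr.1 < pr.2 ∧ -w pr.1 < pr.2 ∧ -w pr.2 < pr.1).card

/-- `x = t s₁ s₂ ⋯ s_k ∈ B_{k+1}`. -/
def xE (k : ℕ) : Equiv.Perm ℤ := (t :: ((List.range k).map fun j => s (j + 1))).prod

/-- `xᵢ = t s₁ ⋯ ŝᵢ ⋯ s_k ∈ B_{k+1}` (the product with `sᵢ` omitted). -/
def xI (k i : ℕ) : Equiv.Perm ℤ :=
  (t :: ((((List.range k).map fun j => j + 1).filter fun j => j ≠ i).map s)).prod

/-- The parabolic subgroup `S_k ⊆ B_k` generated by `s₁, …, s_{k-1}`. -/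
def Spar (k : ℕ) : Subgroup (Equiv.Perm ℤ) := Subgroup.closure (s '' Set.Ico 1 k)

/-- `c(-w)` for `w ∈ S_k`: the number of neat pairs of `w`, i.e. pairs `{i,j}` of distinct
indices `1 ≤ i, j ≤ k` with `w i < j` and `w j < i`. -/
noncomputable def cNeat (k : ℕ) (w : Equiv.Perm ℤ) : ℕ :=
  (((Finset.Icc (1 : ℤ) (k : ℤ)) ×ˢ (Finset.Icc (1 : ℤ) (k : ℤ))).filter
    fun pr => pr.1 < pr.2 ∧ w pr.1 < pr.2 ∧ w pr.2 < pr.1).card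

/-- The set `X_{0,k}` of distinguished (minimal length) right coset representatives of
`S_k` in `B_k`. -/
def X0 (k : ℕ) : Set (Equiv.Perm ℤ) :=
  {x | x ∈ B k ∧ ∀ u ∈ Spar k, len k x ≤ len k (u * x)}

/-- `Succ(w)` for a good involution `w ∈ G_k`. -/
def Succ (k : ℕ) (w : Equiv.Perm ℤ) : Set (Equiv.Perm ℤ) :=
  {xE k * w * (xE k)⁻¹, xE k * w * (xE k)⁻¹ * t} ∪
    {y | ∃ i : ℕ, 1 ≤ i ∧ i ≤ k ∧ w (i : ℤ) = (i : ℤ) ∧ y = xE k * w * (xI k i)⁻¹}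

/-- The element `c = s_{n+1} s_{n+2} ⋯ s_{n+k} ∈ B_{n+k+1}`. -/
def cElt (n k : ℕ) : Equiv.Perm ℤ := ((List.range k).map fun j => s (n + 1 + j)).prod

/-- The palindromic product `s_{n+k} s_{n+k-1} ⋯ s_{n+i} ⋯ s_{n+k-1} s_{n+k}`. -/
def pal (n k i : ℕ) : Equiv.Perm ℤ :=
  (((List.range (k - i)).map fun j => s (n + k - j)) ++ [s (n + i)] ++
    ((List.range (k - i)).map fun j => s (n + i + 1 + j))).prod

/-- The parabolic subgroup `B_n × S_k` of `B_{n+k}`, generated by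
`{t, s₁, …, s_{n-1}} ∪ {s_{n+1}, …, s_{n+k-1}}` (with `t` omitted when `n = 0`). -/
def P (n k : ℕ) : Subgroup (Equiv.Perm ℤ) :=
  Subgroup.closure
    ((if n = 0 then (∅ : Set (Equiv.Perm ℤ)) else {t}) ∪ s '' Set.Ico 1 n ∪
      s '' Set.Ico (n + 1) (n + k))

/-- The factor `S_k` of `B_n × S_k`, generated by `s_{n+1}, …, s_{n+k-1}`. -/
def SparF (n k : ℕ) : Subgroup (Equiv.Perm ℤ) := Subgroup.closure (s '' Set.Ico (n + 1) (n + k))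

/-- The set `X_{n,k}` of distinguished (minimal length) right coset representatives of
`B_n × S_k` in `B_{n+k}`. -/
def Xnk (n k : ℕ) : Set (Equiv.Perm ℤ) :=
  {x | x ∈ B (n + k) ∧ ∀ u ∈ P n k, len (n + k) x ≤ len (n + k) (u * x)}

/-- The strict Bruhat order on `B_m`: `x < w` iff `x ≠ w` and some reduced expression of `w`
has a subword whose product is `x`. -/
def bruhatLT (m : ℕ) (x w : Equiv.Perm ℤ) : Prop :=
  x ≠ w ∧ ∃ L : List (Equiv.Perm ℤ), (∀ g ∈ L, g ∈ gens m) ∧ L.prod = w ∧ L.length = len m w ∧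
    ∃ L' : List (Equiv.Perm ℤ), L'.Sublist L ∧ L'.prod = x

/-!
On `1, …, k + 1` the element `x` acts by `j ↦ j + 1` for `j ≤ k` and `k + 1 ↦ -1`, and it moves
every nonzero value in `[-k, k]` one step away from `0`.  Hence `x w x⁻¹` is `w` transported to
the indices `2, …, k + 1` with `1` fixed, and `x w xᵢ⁻¹` differs from it only by
`1 ↦ -(i + 1)` and `i + 1 ↦ -1`.  Moving values away from `0` does not change which pairs of
positive indices are tidy, so the pairs inside `2, …, k + 1` contribute `c(w)`, while `{1, j + 1}`
is tidy exactly when `w j = j` (and, for `xᵢ`, `j > i`), which counts `a(w)` resp. `d(i, w)`.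
-/
open Equiv

section B

variable {n : ℕ} {w : Perm ℤ}

lemma apply_neg_of_mem_B (hw : w ∈ B n) (a : ℤ) : w (-a) = -w a := hw.1 a

lemma apply_of_lt_abs_of_mem_B (hw : w ∈ B n) {a : ℤ} (ha : (n : ℤ) < |a|) : w a = a :=
  hw.2 a ha

lemma apply_add_one_of_mem_B (hw : w ∈ B n) : w (n + 1) = n + 1 :=
  apply_of_lt_abs_of_mem_B hw (by rw [abs_of_pos (by omega)]; omega)

lemma apply_zero_of_mem_B (hw : w ∈ B n) : w 0 = 0 := by
  have := apply_neg_of_mem_B hw 0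
  rw [neg_zero] at this
  omega

lemma apply_ne_zero_of_mem_B (hw : w ∈ B n) {a : ℤ} (ha : a ≠ 0) : w a ≠ 0 := by
  rw [← apply_zero_of_mem_B hw]
  exact w.injective.ne ha

lemma abs_apply_le_of_mem_B (hw : w ∈ B n) {a : ℤ} (ha : |a| ≤ n) : |w a| ≤ n := by
  by_contra! h
  have hfix : w (w a) = w a := apply_of_lt_abs_of_mem_B hw h
  rw [w.injective hfix] at h
  omega

lemma t_mem_B (hn : 1 ≤ n) : t ∈ B n := by
  refine ⟨fun a => ?_, fun a ha => ?_⟩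
  · simp only [t, swap_apply_def]
    split_ifs <;> omega
  · simp only [t, swap_apply_def]
    rw [lt_abs] at ha
    split_ifs <;> omega

lemma s_mem_B {j : ℕ} (hj : 1 ≤ j) (hjn : j < n) : s j ∈ B n := by
  refine ⟨fun a => ?_, fun a ha => ?_⟩
  · simp only [s, Perm.mul_apply, swap_apply_def]
    split_ifs <;> omega
  · simp only [s, Perm.mul_apply, swap_apply_def]
    rw [lt_abs] at ha
    split_ifs <;> omega

end B

lemma xE_mem_B (k : ℕ) : xE k ∈ B (k + 1) := by
  refine Subgroup.list_prod_mem _ fun g hg => ?_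
  simp only [List.mem_cons, List.mem_map, List.mem_range] at hg
  rcases hg with rfl | ⟨j, hj, rfl⟩
  · exact t_mem_B (by omega)
  · exact s_mem_B (by omega) (by omega)

lemma xI_mem_B (k i : ℕ) : xI k i ∈ B (k + 1) := by
  refine Subgroup.list_prod_mem _ fun g hg => ?_
  simp only [List.mem_cons, List.mem_map, List.mem_filter, List.mem_range] at hg
  rcases hg with rfl | ⟨_, ⟨⟨j, hj, rfl⟩, -⟩, rfl⟩
  · exact t_mem_B (by omega)
  · exact s_mem_B (by omega) (by omega)

lemma s_apply_of_nonneg {j : ℕ} (hj : 1 ≤ j) {a : ℤ} (ha : 0 ≤ a) :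
    s j a = if a = j then (j : ℤ) + 1 else if a = j + 1 then (j : ℤ) else a := by
  simp only [s, Perm.mul_apply, swap_apply_def]
  split_ifs <;> omega

lemma cElt_succ (n k : ℕ) : cElt n (k + 1) = cElt n k * s (n + k + 1) := by
  simp [cElt, List.range_succ, List.prod_append, add_right_comm]

lemma cElt_apply_of_nonneg (n k : ℕ) {a : ℤ} (ha : 0 ≤ a) :
    cElt n k a = if n < a ∧ a ≤ n + k then a + 1 else if a = n + k + 1 then n + 1 else a := by
  induction k generalizing a with
  | zero =>
    simp only [cElt, List.range_zero, List.map_nil, List.prod_nil, Perm.coe_one, id_eq]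
    split_ifs <;> omega
  | succ k ih =>
    rw [cElt_succ, Perm.mul_apply, s_apply_of_nonneg (by omega) ha]
    push_cast
    split_ifs <;> rw [ih (by omega)] <;> split_ifs <;> omega

lemma t_apply_of_nonneg {a : ℤ} (ha : 0 ≤ a) : t a = if a = 1 then -1 else a := by
  simp only [t, swap_apply_def]
  split_ifs <;> omega

lemma xE_eq (k : ℕ) : xE k = t * cElt 0 k := by
  simp [xE, cElt, add_comm]

lemma xI_eq {k i : ℕ} (hi : 1 ≤ i) (hik : i ≤ k) :
    xI k i = t * (cElt 0 (i - 1) * cElt i (k - i)) := by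
  obtain ⟨p, rfl⟩ : ∃ p, i = p + 1 := ⟨i - 1, by omega⟩
  obtain ⟨r, rfl⟩ : ∃ r, k = p + 1 + r := ⟨k - (p + 1), by omega⟩
  simp only [xI, ne_eq, decide_not, List.range_add, List.range_one, List.map_cons, add_zero,
    List.map_nil, List.append_assoc, List.cons_append, List.nil_append, List.map_append,
    List.map_map, Function.comp_def, List.filter_append, List.filter_map, Nat.add_right_cancel_iff,
    decide_true, Bool.not_true, Bool.false_eq_true, not_false_eq_true,
    List.filter_cons_of_neg, List.prod_cons, List.prod_append, cElt, zero_add,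
    add_tsub_cancel_right, add_tsub_cancel_left, mul_right_inj]
  rw [List.filter_eq_self.2 (by simp; omega), List.filter_eq_self.2 (by simp; omega)]
  congr 3 with j <;> congr 2 <;> omega

lemma xE_apply_of_nonneg (k : ℕ) {a : ℤ} (ha : 0 ≤ a) :
    xE k a = if 0 < a ∧ a ≤ k then a + 1 else if a = k + 1 then -1 else a := by
  rw [xE_eq, Perm.mul_apply, cElt_apply_of_nonneg _ _ ha]
  push_cast
  split_ifs <;> rw [t_apply_of_nonneg (by omega)] <;> split_ifs <;> omega

lemma xI_apply_of_nonneg {k i : ℕ} (hi : 1 ≤ i) (hik : i ≤ k) {a : ℤ} (ha : 0 ≤ a) :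
    xI k i a =
      if a = i then -1 else if 0 < a ∧ a ≤ k then a + 1 else if a = k + 1 then i + 1 else a := by
  rw [xI_eq hi hik, Perm.mul_apply, Perm.mul_apply, cElt_apply_of_nonneg _ _ ha]
  have hi' : ((i - 1 : ℕ) : ℤ) = i - 1 := by omega
  have hki : ((k - i : ℕ) : ℤ) = k - i := by omega
  split_ifs <;> rw [cElt_apply_of_nonneg _ _ (by omega)] <;> push_cast [hi', hki] <;>
    split_ifs <;> rw [t_apply_of_nonneg (by omega)] <;> split_ifs <;> omega

lemma xE_apply_of_mem_Icc {k : ℕ} {a : ℤ} (ha : 1 ≤ a) (hak : a ≤ k) : xE k a = a + 1 := by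
  rw [xE_apply_of_nonneg k (by omega), if_pos ⟨by omega, hak⟩]

lemma xE_apply_add_one (k : ℕ) : xE k (k + 1) = -1 := by
  rw [xE_apply_of_nonneg k (by omega), if_neg (by omega), if_pos rfl]

lemma xI_apply_of_mem_Icc {k i : ℕ} (hi : 1 ≤ i) (hik : i ≤ k) {a : ℤ} (ha : 1 ≤ a) (hak : a ≤ k)
    (hai : a ≠ i) : xI k i a = a + 1 := by
  rw [xI_apply_of_nonneg hi hik (by omega), if_neg hai, if_pos ⟨by omega, hak⟩]

lemma xI_apply_self {k i : ℕ} (hi : 1 ≤ i) (hik : i ≤ k) : xI k i i = -1 := by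
  rw [xI_apply_of_nonneg hi hik (by omega), if_pos rfl]

lemma xI_apply_add_one {k i : ℕ} (hi : 1 ≤ i) (hik : i ≤ k) : xI k i (k + 1) = i + 1 := by
  rw [xI_apply_of_nonneg hi hik (by omega), if_neg (by omega), if_neg (by omega), if_pos rfl]

section Counting

open Finset

lemma card_pairs_Icc_add_one (n : ℤ) (R : ℤ → ℤ → Prop) [DecidableRel R] :
    #{p ∈ Icc 1 (n + 1) ×ˢ Icc 1 (n + 1) | p.1 < p.2 ∧ R p.1 p.2} =
      #{b ∈ Icc 1 n | R 1 (b + 1)} +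
        #{p ∈ Icc 1 n ×ˢ Icc 1 n | p.1 < p.2 ∧ R (p.1 + 1) (p.2 + 1)} := by
  rw [← card_filter_add_card_filter_not (p := fun p => p.1 = 1)]
  congr 1
  · refine card_nbij' (fun p => p.2 - 1) (fun b => (1, b + 1)) ?_ ?_ ?_ ?_
    · rintro ⟨a, b⟩ h
      simp only [coe_filter, mem_filter, mem_product, mem_Icc, Set.mem_ofPred_eq] at h ⊢
      obtain ⟨⟨⟨-, hb⟩, hab, hR⟩, rfl⟩ := h
      exact ⟨⟨by omega, by omega⟩, by simpa using hR⟩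
    · intro b h
      simp only [coe_filter, mem_filter, mem_product, mem_Icc, Set.mem_ofPred_eq] at h ⊢
      exact ⟨⟨⟨⟨le_rfl, by omega⟩, by omega, by omega⟩, by omega, h.2⟩, trivial⟩
    · rintro ⟨a, b⟩ h
      simp only [coe_filter, Set.mem_ofPred_eq] at h
      simp [← h.2]
    · intro b _
      simp
  · refine card_nbij' (fun p => (p.1 - 1, p.2 - 1)) (fun p => (p.1 + 1, p.2 + 1)) ?_ ?_ ?_ ?_
    · rintro ⟨a, b⟩ h
      simp only [coe_filter, mem_filter, mem_product, mem_Icc, Set.mem_ofPred_eq] at h ⊢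
      refine ⟨⟨⟨by omega, by omega⟩, by omega, by omega⟩, by omega, by simpa using h.1.2.2⟩
    · rintro ⟨a, b⟩ h
      simp only [coe_filter, mem_filter, mem_product, mem_Icc, Set.mem_ofPred_eq] at h ⊢
      exact ⟨⟨⟨⟨by omega, by omega⟩, by omega, by omega⟩, by omega, h.2.2⟩, by omega⟩
    · intro p _
      simp
    · intro p _
      simp

lemma cTidy_add_one_eq_of_tidy_iff {k : ℕ} {w z : Perm ℤ} {q : ℤ} (hq : 0 ≤ q)
    (hfirst : ∀ b : ℤ, 1 ≤ b → b ≤ k → (-z 1 < b + 1 ∧ -z (b + 1) < 1 ↔ q < b ∧ w b = b))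
    (hshift : ∀ a b : ℤ, 1 ≤ a → a ≤ k → 1 ≤ b → b ≤ k → (-z (a + 1) < b + 1 ↔ -w a < b)) :
    cTidy (k + 1) z = cTidy k w + dFix k q w := by
  rw [cTidy, Nat.cast_succ, card_pairs_Icc_add_one _ (fun a b => -z a < b ∧ -z b < a), add_comm]
  congr 1
  · refine congrArg card (filter_congr fun ⟨a, b⟩ h => ?_)
    simp only [mem_product, mem_Icc] at h
    rw [hshift a b h.1.1 h.1.2 h.2.1 h.2.2, hshift b a h.2.1 h.2.2 h.1.1 h.1.2]
  · refine congrArg card (ext fun b => ?_)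
    simp only [mem_filter, mem_Icc, mem_Ioc]
    constructor
    · rintro ⟨hb, h⟩
      obtain ⟨hqb, hwb⟩ := (hfirst b hb.1 hb.2).1 h
      exact ⟨⟨hqb, hb.2⟩, hwb⟩
    · rintro ⟨hb, hwb⟩
      exact ⟨⟨by omega, hb.2⟩, (hfirst b (by omega) hb.2).2 ⟨hb.1, hwb⟩⟩

end Counting

lemma neg_xE_apply_lt_add_one_iff {k : ℕ} {v b : ℤ} (hv : v ≠ 0) (hvk : |v| ≤ k) (hb : 0 ≤ b) :
    -xE k v < b + 1 ↔ -v < b := by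
  rcases hv.lt_or_gt with hneg | hpos
  · rw [← neg_neg v, apply_neg_of_mem_B (xE_mem_B k), xE_apply_of_mem_Icc (by omega) (by
      rw [abs_of_neg hneg] at hvk; omega)]
    omega
  · rw [xE_apply_of_mem_Icc hpos (by rw [abs_of_pos hpos] at hvk; exact hvk)]
    omega

lemma Good.apply_pos_iff {k : ℕ} {w : Perm ℤ} (hw : Good k w) {b : ℤ} (hb : 1 ≤ b) (hbk : b ≤ k) :
    0 < w b ↔ w b = b := by
  rcases hw.2.2 b hb hbk with h | h <;> constructor <;> intro <;> omega

/-- `q = 0` serves `x w x⁻¹` and `x w x⁻¹ t`; `q = i` serves `x w xᵢ⁻¹`, which sends `i + 1`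
to `-1`. -/
lemma cTidy_add_one_eq_of_apply_add_one {k : ℕ} {w z : Perm ℤ} {q : ℤ} (hw : Good k w)
    (hq : 0 ≤ q)
    (hz₁ : ∀ b : ℤ, 1 ≤ b → b ≤ k → (-z 1 < b + 1 ↔ q < b))
    (hz : ∀ a : ℤ, 1 ≤ a → a ≤ k → a ≠ q → z (a + 1) = xE k (w a))
    (hzq : 1 ≤ q → z (q + 1) = -1 ∧ w q = q) :
    cTidy (k + 1) z = cTidy k w + dFix k q w := by
  have hxw : ∀ a b : ℤ, 1 ≤ a → a ≤ k → 0 ≤ b → (-xE k (w a) < b + 1 ↔ -w a < b) :=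
    fun a b ha hak hb => neg_xE_apply_lt_add_one_iff (apply_ne_zero_of_mem_B hw.1 (by omega))
      (abs_apply_le_of_mem_B hw.1 (abs_le.2 ⟨by omega, hak⟩)) hb
  refine cTidy_add_one_eq_of_tidy_iff hq (fun b hb hbk => ?_) (fun a b ha hak hb hbk => ?_)
  · rw [hz₁ b hb hbk]
    rcases eq_or_ne b q with rfl | hbq
    · rw [(hzq hb).1]
      omega
    · rw [hz b hb hbk hbq, ← zero_add 1, hxw b 0 hb hbk le_rfl, neg_neg_iff_pos,
        hw.apply_pos_iff hb hbk]
  · rcases eq_or_ne a q with rfl | haq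
    · rw [(hzq ha).1, (hzq ha).2]
      omega
    · rw [hz a ha hak haq, hxw a b ha hak (by omega)]

lemma aFix_eq_dFix_zero (m : ℕ) (w : Perm ℤ) : aFix m w = dFix m 0 w := by
  rw [aFix, dFix, ← Finset.Icc_add_one_left_eq_Ioc, zero_add]

section Conjugates

variable {k : ℕ} {w : Perm ℤ}

lemma xE_conj_apply_add_one {a : ℤ} (ha : 1 ≤ a) (hak : a ≤ k) :
    (xE k * w * (xE k)⁻¹) (a + 1) = xE k (w a) := by
  rw [Perm.mul_apply, Perm.mul_apply, Perm.inv_eq_iff_eq.2 (xE_apply_of_mem_Icc ha hak).symm]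

lemma cTidy_xE_conj (hw : Good k w) :
    cTidy (k + 1) (xE k * w * (xE k)⁻¹) = cTidy k w + aFix k w := by
  have hx₁ : (xE k)⁻¹ 1 = -(k + 1) := by
    rw [Perm.inv_eq_iff_eq, apply_neg_of_mem_B (xE_mem_B k), xE_apply_add_one, neg_neg]
  have hz₁ : (xE k * w * (xE k)⁻¹) 1 = 1 := by
    rw [Perm.mul_apply, Perm.mul_apply, hx₁, apply_neg_of_mem_B hw.1, apply_add_one_of_mem_B hw.1,
      apply_neg_of_mem_B (xE_mem_B k), xE_apply_add_one, neg_neg]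
  rw [aFix_eq_dFix_zero]
  refine cTidy_add_one_eq_of_apply_add_one hw le_rfl (fun b hb _ => ?_)
    (fun a ha hak _ => xE_conj_apply_add_one ha hak) (fun h => absurd h (by omega))
  rw [hz₁]
  omega

lemma cTidy_xE_conj_mul_t (hw : Good k w) :
    cTidy (k + 1) (xE k * w * (xE k)⁻¹ * t) = cTidy k w + aFix k w := by
  have ht : ∀ a : ℤ, 2 ≤ a → t a = a := fun a ha => by
    rw [t_apply_of_nonneg (by omega), if_neg (by omega)]
  have hz₁ : (xE k * w * (xE k)⁻¹ * t) 1 = -1 := by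
    rw [Perm.mul_apply, t, swap_apply_right, Perm.mul_apply, Perm.mul_apply,
      Perm.inv_eq_iff_eq.2 (xE_apply_add_one k).symm, apply_add_one_of_mem_B hw.1, xE_apply_add_one]
  rw [aFix_eq_dFix_zero]
  refine cTidy_add_one_eq_of_apply_add_one hw le_rfl (fun b hb _ => ?_)
    (fun a ha hak _ => ?_) (fun h => absurd h (by omega))
  · rw [hz₁]
    omega
  · rw [Perm.mul_apply, ht _ (by omega), xE_conj_apply_add_one ha hak]

lemma cTidy_xE_mul_xI_inv (hw : Good k w) {i : ℕ} (hi : 1 ≤ i) (hik : i ≤ k)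
    (hwi : w i = i) : cTidy (k + 1) (xE k * w * (xI k i)⁻¹) = cTidy k w + dFix k i w := by
  have hz₁ : (xE k * w * (xI k i)⁻¹) 1 = -(i + 1) := by
    rw [Perm.mul_apply, Perm.mul_apply, Perm.inv_eq_iff_eq.2 (by
      rw [apply_neg_of_mem_B (xI_mem_B k i), xI_apply_self hi hik, neg_neg]),
      apply_neg_of_mem_B hw.1, hwi, apply_neg_of_mem_B (xE_mem_B k),
      xE_apply_of_mem_Icc (by omega) (by omega)]
  refine cTidy_add_one_eq_of_apply_add_one hw (by omega) (fun b hb _ => ?_)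
    (fun a ha hak hai => ?_) (fun _ => ⟨?_, hwi⟩)
  · rw [hz₁]
    omega
  · rw [Perm.mul_apply, Perm.mul_apply,
      Perm.inv_eq_iff_eq.2 (xI_apply_of_mem_Icc hi hik ha hak hai).symm]
  · rw [Perm.mul_apply, Perm.mul_apply, Perm.inv_eq_iff_eq.2 (xI_apply_add_one hi hik).symm,
      apply_add_one_of_mem_B hw.1, xE_apply_add_one]

end Conjugates

theorem cTidy_succ_general (k : ℕ) (w : Equiv.Perm ℤ) (hw : Good k w) :
    (cTidy (k + 1) (xE k * w * (xE k)⁻¹) = cTidy k w + aFix k w ∧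
      cTidy (k + 1) (xE k * w * (xE k)⁻¹ * t) = cTidy k w + aFix k w) ∧
    (∀ i : ℕ, 1 ≤ i → i ≤ k → w (i : ℤ) = (i : ℤ) →
      cTidy (k + 1) (xE k * w * (xI k i)⁻¹) = cTidy k w + dFix k (i : ℤ) w) :=
  ⟨⟨cTidy_xE_conj hw, cTidy_xE_conj_mul_t hw⟩,
    fun _ hi hik hwi => cTidy_xE_mul_xI_inv hw hi hik hwi⟩

theorem cTidy_succ (k : ℕ) (hk : 1 ≤ k) (w : Equiv.Perm ℤ) (hw : Good k w) :
    (cTidy (k + 1) (xE k * w * (xE k)⁻¹) = cTidy k w + aFix k w ∧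
      cTidy (k + 1) (xE k * w * (xE k)⁻¹ * t) = cTidy k w + aFix k w) ∧
    (∀ i : ℕ, 1 ≤ i → i ≤ k → w (i : ℤ) = (i : ℤ) →
      cTidy (k + 1) (xE k * w * (xI k i)⁻¹) = cTidy k w + dFix k (i : ℤ) w) :=
  cTidy_succ_general k w hw

end PaperB
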